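/- arXiv:2011.04572 — 2 statements merged into one kernel-verified Lean document; each statement's English description precedes it below -/
import Mathlib

section
/- Let $f:\{0,1\}^n\to\{0,1\}$, $S\subseteq[n]$, and $t\in[0,1]$. Then $0\le -\frac{d}{dt}\mathrm{Q}_t^S(f)\le \frac14\sum_{i\in S}\mathrm{Q}_t^S(\mathbf{1}_{\{i\text{ is pivotal for }f\}})$, with equality in the second inequality when $f$ is monotone (non-decreasing in each coordinate). -/
open Finset

/-- Joint weight of the heterogeneously noised pair: coordinates in `S` are resampled
with probability `t`, coordinates outside `S` with probability `1`. -/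
noncomputable def noiseWeightS (n : ℕ) (S : Finset (Fin n)) (t : ℝ) (x y : Fin n → Bool) : ℝ :=
  ∏ i : Fin n,
    (2:ℝ)⁻¹ * ((1 - (if i ∈ S then t else 1)) * (if x i = y i then 1 else 0)
      + (if i ∈ S then t else 1) / 2)

/-- `Q_t^S(f) = E[f(X) f(Y)]`. -/
noncomputable def QnoiseS (n : ℕ) (S : Finset (Fin n)) (t : ℝ) (f : (Fin n → Bool) → ℝ) : ℝ :=
  ∑ x : Fin n → Bool, ∑ y : Fin n → Bool, noiseWeightS n S t x y * f x * f y

/-- Indicator of the event that `i` is pivotal for `f`. -/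
noncomputable def pivInd {n : ℕ} (f : (Fin n → Bool) → ℝ) (i : Fin n)
    (x : Fin n → Bool) : ℝ :=
  if f (Function.update x i (!(x i))) ≠ f x then 1 else 0

/-!
With `ρ = 1 - t` and `χ(b) = ±1`, the noise weight is `4⁻ⁿ ∏_{j ∈ S} (1 + ρ χ(x j) χ(y j))`.
Splitting off the factor `j = i` and averaging over flips of the `i`-th coordinate of `x`
and of `y` gives, for the bilinear form `B_E` of this kernel and
`∂ᵢ g x = g (x with xᵢ = 1) - g (x with xᵢ = 0)`,
`B_E(g, h) = B_{E∖i}(g, h) + ρ/4 · B_{E∖i}(∂ᵢ g, ∂ᵢ h)`.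
By induction on `E` this makes `B_E(g, g) ≥ 0` for `ρ ≥ 0`; with the product rule it gives
`d/dρ B_S(f, f) = ¼ ∑_{i ∈ S} B_{S∖i}(∂ᵢ f, ∂ᵢ f)`; and since the pivotality indicator
`|∂ᵢ f|` does not depend on `xᵢ`, it gives `Q_t^S(i piv.) = 4⁻ⁿ B_{S∖i}(|∂ᵢ f|, |∂ᵢ f|)`.
For `|ρ| ≤ 1` the kernel is nonnegative, so `B(g, g) ≤ B(|g|, |g|)`, with equality when
`∂ᵢ f ≥ 0`, i.e. when `f` is monotone.
-/

open Function

noncomputable section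

namespace BooleanCube

variable {ι : Type*}

def chi (b : Bool) : ℝ := if b then 1 else -1

def corrKernel (E : Finset ι) (r : ℝ) (x y : ι → Bool) : ℝ :=
  ∏ j ∈ E, (1 + r * (chi (x j) * chi (y j)))

lemma corrKernel_comm (E : Finset ι) (r : ℝ) (x y : ι → Bool) :
    corrKernel E r x y = corrKernel E r y x :=
  prod_congr rfl fun j _ => by rw [mul_comm (chi (x j))]

lemma corrKernel_nonneg (E : Finset ι) {r : ℝ} (hr : |r| ≤ 1) (x y : ι → Bool) :
    0 ≤ corrKernel E r x y := by
  refine prod_nonneg fun j _ => ?_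
  have hchi : |chi (x j) * chi (y j)| = 1 := by
    cases x j <;> cases y j <;> simp [chi]
  have := neg_abs_le (r * (chi (x j) * chi (y j)))
  rw [abs_mul, hchi, mul_one] at this
  linarith

variable [DecidableEq ι]

def coordDiff (i : ι) (g : (ι → Bool) → ℝ) (x : ι → Bool) : ℝ :=
  g (update x i true) - g (update x i false)

lemma coordDiff_update (i : ι) (g : (ι → Bool) → ℝ) (x : ι → Bool) (b : Bool) :
    coordDiff i g (update x i b) = coordDiff i g x := by
  simp [coordDiff]

lemma coordDiff_eq_zero {i : ι} {g : (ι → Bool) → ℝ} (hg : ∀ x b, g (update x i b) = g x) :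
    coordDiff i g = 0 := by
  ext x
  simp [coordDiff, hg]

lemma coordDiff_nonneg_of_monotone {g : (ι → Bool) → ℝ} (hg : Monotone g) (i : ι)
    (x : ι → Bool) : 0 ≤ coordDiff i g x :=
  sub_nonneg.mpr (hg (update_le_update_iff'.mpr (by decide)))

lemma chi_mul_add_chi_not_mul (i : ι) (g : (ι → Bool) → ℝ) (x : ι → Bool) :
    chi (x i) * g x + chi (!x i) * g (update x i (!x i)) = coordDiff i g x := by
  obtain ⟨z, b, rfl⟩ : ∃ z b, x = update z i b := ⟨x, x i, (update_eq_self i x).symm⟩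
  cases b <;> simp [chi, coordDiff] <;> ring

lemma corrKernel_update_left {E : Finset ι} {i : ι} (hi : i ∉ E) (r : ℝ) (x y : ι → Bool)
    (b : Bool) : corrKernel E r (update x i b) y = corrKernel E r x y :=
  prod_congr rfl fun j hj => by rw [update_of_ne (ne_of_mem_of_not_mem hj hi)]

variable [Fintype ι]

def corrForm (E : Finset ι) (r : ℝ) (g h : (ι → Bool) → ℝ) : ℝ :=
  ∑ x, ∑ y, corrKernel E r x y * g x * h y

lemma sum_chi_mul_of_update_invariant (i : ι) {G : (ι → Bool) → ℝ}
    (hG : ∀ x b, G (update x i b) = G x) (g : (ι → Bool) → ℝ) :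
    ∑ x, chi (x i) * (G x * g x) = 2⁻¹ * ∑ x, G x * coordDiff i g x := by
  have hflip : Involutive fun x : ι → Bool => update x i (!x i) := fun x => by simp
  have hsum : ∑ x, chi (x i) * (G x * g x)
      = ∑ x, chi (!x i) * (G x * g (update x i (!x i))) := by
    rw [← Equiv.sum_comp (hflip.toPerm _)]
    simp [hG]
  rw [eq_inv_mul_iff_mul_eq₀ two_ne_zero, two_mul]
  nth_rewrite 2 [hsum]
  rw [← sum_add_distrib]
  refine sum_congr rfl fun x _ => ?_
  rw [← chi_mul_add_chi_not_mul]
  ring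

lemma sum_chi_mul_chi_mul_corrKernel {E : Finset ι} {i : ι} (hi : i ∉ E) (r : ℝ)
    (g h : (ι → Bool) → ℝ) :
    ∑ x, ∑ y, chi (x i) * chi (y i) * corrKernel E r x y * g x * h y
      = 4⁻¹ * corrForm E r (coordDiff i g) (coordDiff i h) := by
  have hx : ∀ y, ∑ x, chi (x i) * (corrKernel E r x y * g x)
      = 2⁻¹ * ∑ x, corrKernel E r x y * coordDiff i g x := fun y =>
    sum_chi_mul_of_update_invariant i (fun x b => corrKernel_update_left hi r x y b) g
  have hy : ∀ x, ∑ y, chi (y i) * (corrKernel E r x y * h y)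
      = 2⁻¹ * ∑ y, corrKernel E r x y * coordDiff i h y := fun x => by
    simp_rw [corrKernel_comm E r x]
    exact sum_chi_mul_of_update_invariant i (fun y b => corrKernel_update_left hi r y x b) h
  calc ∑ x, ∑ y, chi (x i) * chi (y i) * corrKernel E r x y * g x * h y
      = ∑ y, chi (y i) * h y * ∑ x, chi (x i) * (corrKernel E r x y * g x) := by
        rw [sum_comm]; simp_rw [mul_sum]
        exact sum_congr rfl fun _ _ => sum_congr rfl fun _ _ => by ring
    _ = 2⁻¹ * ∑ x, coordDiff i g x * ∑ y, chi (y i) * (corrKernel E r x y * h y) := by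
        simp_rw [hx, mul_sum]; rw [sum_comm]
        exact sum_congr rfl fun _ _ => sum_congr rfl fun _ _ => by ring
    _ = 4⁻¹ * corrForm E r (coordDiff i g) (coordDiff i h) := by
        simp_rw [hy, corrForm, mul_sum]
        exact sum_congr rfl fun _ _ => sum_congr rfl fun _ _ => by ring

lemma corrForm_insert {E : Finset ι} {i : ι} (hi : i ∉ E) (r : ℝ) (g h : (ι → Bool) → ℝ) :
    corrForm (insert i E) r g h
      = corrForm E r g h + r / 4 * corrForm E r (coordDiff i g) (coordDiff i h) := by
  rw [div_eq_mul_inv, mul_assoc, ← sum_chi_mul_chi_mul_corrKernel hi, corrForm, corrForm,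
    mul_sum, ← sum_add_distrib]
  refine sum_congr rfl fun x _ => ?_
  rw [mul_sum, ← sum_add_distrib]
  refine sum_congr rfl fun y _ => ?_
  rw [corrKernel, prod_insert hi, ← corrKernel]
  ring

lemma corrForm_zero_left (E : Finset ι) (r : ℝ) (h : (ι → Bool) → ℝ) :
    corrForm E r 0 h = 0 := by
  simp [corrForm]

lemma corrForm_empty (r : ℝ) (g h : (ι → Bool) → ℝ) :
    corrForm ∅ r g h = (∑ x, g x) * ∑ y, h y := by
  simp [corrForm, corrKernel, sum_mul_sum]

lemma corrForm_self_nonneg (E : Finset ι) {r : ℝ} (hr : 0 ≤ r) (g : (ι → Bool) → ℝ) :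
    0 ≤ corrForm E r g g := by
  induction E using Finset.induction_on generalizing g with
  | empty => rw [corrForm_empty]; exact mul_self_nonneg _
  | insert i E hi ih =>
    rw [corrForm_insert hi]
    exact add_nonneg (ih g) (mul_nonneg (by positivity) (ih _))

lemma corrForm_le_corrForm_abs (E : Finset ι) {r : ℝ} (hr : |r| ≤ 1) (g : (ι → Bool) → ℝ) :
    corrForm E r g g ≤ corrForm E r |g| |g| := by
  refine sum_le_sum fun x _ => sum_le_sum fun y _ => ?_
  simp_rw [mul_assoc, Pi.abs_apply, ← abs_mul]
  exact mul_le_mul_of_nonneg_left (le_abs_self _) (corrKernel_nonneg E hr x y)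

lemma hasDerivAt_corrForm (E : Finset ι) (g h : (ι → Bool) → ℝ) (r : ℝ) :
    HasDerivAt (fun s => corrForm E s g h)
      (4⁻¹ * ∑ i ∈ E, corrForm (E.erase i) r (coordDiff i g) (coordDiff i h)) r := by
  have hK : ∀ x y, HasDerivAt (fun s => corrKernel E s x y)
      (∑ i ∈ E, corrKernel (E.erase i) r x y * (chi (x i) * chi (y i))) r := fun x y =>
    HasDerivAt.fun_finsetProd fun i _ => ((hasDerivAt_id r).mul_const _).const_add 1 |>.congr_deriv
      (one_mul _)
  refine (HasDerivAt.fun_sum (u := univ) fun x _ => HasDerivAt.fun_sum (u := univ) fun y _ =>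
    ((hK x y).mul_const (g x)).mul_const (h y)).congr_deriv ?_
  rw [mul_sum]
  refine .trans ?_
    (sum_congr rfl fun i _ => sum_chi_mul_chi_mul_corrKernel (notMem_erase i E) r g h)
  simp_rw [sum_mul]
  conv_rhs => rw [sum_comm]; enter [2, x]; rw [sum_comm]
  exact sum_congr rfl fun x _ => sum_congr rfl fun y _ => sum_congr rfl fun i _ => by ring

end BooleanCube

end

open BooleanCube

lemma noiseWeightS_eq (n : ℕ) (S : Finset (Fin n)) (t : ℝ) (x y : Fin n → Bool) :
    noiseWeightS n S t x y = (4 ^ n)⁻¹ * corrKernel S (1 - t) x y := by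
  have hconst : ((4 : ℝ) ^ n)⁻¹ = ∏ _i : Fin n, (4 : ℝ)⁻¹ := by simp
  rw [hconst, corrKernel, ← Fintype.prod_ite_mem S, ← prod_mul_distrib]
  refine prod_congr rfl fun i _ => ?_
  by_cases hi : i ∈ S <;> cases x i <;> cases y i <;> simp [hi, chi] <;> ring

lemma QnoiseS_eq_corrForm (n : ℕ) (S : Finset (Fin n)) (t : ℝ) (g : (Fin n → Bool) → ℝ) :
    QnoiseS n S t g = (4 ^ n)⁻¹ * corrForm S (1 - t) g g := by
  simp_rw [QnoiseS, noiseWeightS_eq, corrForm, mul_sum, mul_assoc]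

lemma neg_deriv_QnoiseS (n : ℕ) (S : Finset (Fin n)) (g : (Fin n → Bool) → ℝ) (t : ℝ) :
    -deriv (fun s => QnoiseS n S s g) t
      = 4⁻¹ * ∑ i ∈ S,
          (4 ^ n)⁻¹ * corrForm (S.erase i) (1 - t) (coordDiff i g) (coordDiff i g) := by
  have hQ : HasDerivAt (fun s => QnoiseS n S s g) ((4 ^ n)⁻¹ *
      ((4⁻¹ * ∑ i ∈ S, corrForm (S.erase i) (1 - t) (coordDiff i g) (coordDiff i g)) * -1)) t := by
    simp_rw [QnoiseS_eq_corrForm]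
    exact (((hasDerivAt_corrForm S g g (1 - t)).comp t
      ((hasDerivAt_id t).const_sub 1)).const_mul _)
  rw [hQ.deriv, ← mul_sum]
  ring

lemma pivInd_eq_abs_coordDiff {n : ℕ} {f : (Fin n → Bool) → ℝ} (hf : ∀ x, f x = 0 ∨ f x = 1)
    (i : Fin n) : pivInd f i = |coordDiff i f| := by
  ext x
  obtain ⟨z, b, rfl⟩ : ∃ z b, x = update z i b := ⟨x, x i, (update_eq_self i x).symm⟩
  rcases hf (update z i true) with h1 | h1 <;> rcases hf (update z i false) with h0 | h0 <;>
    cases b <;> simp [pivInd, coordDiff, h0, h1]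

lemma QnoiseS_pivInd {n : ℕ} (S : Finset (Fin n)) {f : (Fin n → Bool) → ℝ}
    (hf : ∀ x, f x = 0 ∨ f x = 1) (t : ℝ) {i : Fin n} (hi : i ∈ S) :
    QnoiseS n S t (pivInd f i)
      = (4 ^ n)⁻¹ * corrForm (S.erase i) (1 - t) |coordDiff i f| |coordDiff i f| := by
  have hexpand := corrForm_insert (notMem_erase i S) (1 - t) |coordDiff i f| |coordDiff i f|
  have hinv : ∀ x b, |coordDiff i f| (update x i b) = |coordDiff i f| x := by
    simp [coordDiff_update]
  rw [insert_erase hi, coordDiff_eq_zero hinv, corrForm_zero_left, mul_zero, add_zero] at hexpand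
  rw [QnoiseS_eq_corrForm, pivInd_eq_abs_coordDiff hf, hexpand]

/-- dynamical Margulis–Russo formula:
`0 ≤ -(d/dt) Q_t^S(f) ≤ (1/4) ∑_{i ∈ S} Q_t^S(i piv. for f)`, with equality in the
second inequality when `f` is monotone. -/
theorem dynamical_margulis_russo (n : ℕ) (S : Finset (Fin n))
    (f : (Fin n → Bool) → ℝ) (hf : ∀ x, f x = 0 ∨ f x = 1)
    (t : ℝ) (ht : t ∈ Set.Icc (0:ℝ) 1) :
    0 ≤ -(deriv (fun s => QnoiseS n S s f) t) ∧
    -(deriv (fun s => QnoiseS n S s f) t) ≤ 4⁻¹ * ∑ i ∈ S, QnoiseS n S t (pivInd f i) ∧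
    (Monotone f →
      -(deriv (fun s => QnoiseS n S s f) t) = 4⁻¹ * ∑ i ∈ S, QnoiseS n S t (pivInd f i)) := by
  obtain ⟨ht0, ht1⟩ := ht
  have hr : |1 - t| ≤ 1 := abs_le.mpr ⟨by linarith, by linarith⟩
  rw [neg_deriv_QnoiseS]
  refine ⟨?_, ?_, fun hmono => ?_⟩
  · exact mul_nonneg (by norm_num) (sum_nonneg fun i _ =>
      mul_nonneg (by positivity) (corrForm_self_nonneg _ (by linarith) _))
  · gcongr with i hi
    rw [QnoiseS_pivInd S hf t hi]
    gcongr
    exact corrForm_le_corrForm_abs _ hr _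
  · congr 1
    refine sum_congr rfl fun i hi => ?_
    rw [QnoiseS_pivInd S hf t hi, abs_of_nonneg (coordDiff_nonneg_of_monotone hmono i)]
end

section
/- Fix $\gamma\in(0,1)$ and $\zeta>0$ with $1-\gamma>\tfrac43\zeta$. Suppose $\pi^\star_n(t)\le\alpha^\star_n$ for all $t$, $\pi^\star_n(t)\le C(\alpha^\star_n)^2/\alpha^\star_{\ell(t)}$ for $t\ge\varepsilon_n$, $\ell(t)=t^{-4/3+o(1)}$ as $t\to0$, $\varepsilon_n=n^{-3/4+o(1)}$, and $\alpha^\star_m=m^{-\zeta+o(1)}$. Then $\sup_n\int_0^1 t^{-\gamma}\,\pi^\star_n(t)/(\alpha^\star_n)^2\,dt<\infty$. -/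
/-!
Split the integral at `ε n`. Below `ε n` the trivial bound `π⋆_n ≤ α⋆_n` leaves
`ε_n^(1-γ) / ((1-γ) α⋆_n) = n^(-3(1-γ)/4 + ζ + o(1))`, which is bounded because `1 - γ > 4ζ/3`.
Above `ε n` the sensitivity bound leaves `C t^(-γ) / α⋆_ℓ(t) = t^(-γ - 4ζ/3 - o(1))`, which is
integrable on `[0, 1]` for the same reason. Every `o(1)` is replaced by one explicit `δ = d`,
small enough that both strict exponent inequalities survive.
-/

open MeasureTheory Set Filter Topology

namespace intervalIntegral

theorem integral_le_add_of_le_on_split {f g₁ g₂ : ℝ → ℝ} {a b c : ℝ} (hab : a ≤ b) (hbc : b ≤ c)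
    (hf : ∀ t ∈ Icc a c, 0 ≤ f t) (h₁ : ∀ t ∈ Icc a b, f t ≤ g₁ t)
    (h₂ : ∀ t ∈ Icc b c, f t ≤ g₂ t)
    (hg₁ : IntervalIntegrable g₁ volume a b) (hg₂ : IntervalIntegrable g₂ volume b c) :
    ∫ t in a..c, f t ≤ (∫ t in a..b, g₁ t) + ∫ t in b..c, g₂ t := by
  have hb : b ∈ uIcc a c := by rw [uIcc_of_le (hab.trans hbc)]; exact ⟨hab, hbc⟩
  by_cases hfi : IntervalIntegrable f volume a c
  · have hf₁ := hfi.mono_set (uIcc_subset_uIcc_left hb)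
    have hf₂ := hfi.mono_set (uIcc_subset_uIcc_right hb)
    rw [← integral_add_adjacent_intervals hf₁ hf₂]
    exact add_le_add (integral_mono_on hab hf₁ hg₁ h₁) (integral_mono_on hbc hf₂ hg₂ h₂)
  · -- junk value: a non-integrable `f` has integral `0`
    rw [integral_undef hfi]
    exact add_nonneg
      (integral_nonneg hab fun t ht => (hf t ⟨ht.1, ht.2.trans hbc⟩).trans (h₁ t ht))
      (integral_nonneg hbc fun t ht => (hf t ⟨hab.trans ht.1, ht.2⟩).trans (h₂ t ht))

end intervalIntegral

theorem integral_zero_rpow_neg {γ : ℝ} (hγ : γ < 1) (a : ℝ) :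
    ∫ t in (0 : ℝ)..a, t ^ (-γ) = a ^ (1 - γ) / (1 - γ) := by
  rw [integral_rpow (Or.inl (by linarith)), neg_add_eq_sub, Real.zero_rpow (by linarith),
    sub_zero]

theorem integral_rpow_neg_le {γ a : ℝ} (hγ : γ < 1) (ha : 0 ≤ a) :
    ∫ t in a..1, t ^ (-γ) ≤ 1 / (1 - γ) := by
  rw [integral_rpow (Or.inl (by linarith)), neg_add_eq_sub, Real.one_rpow]
  exact div_le_div_of_nonneg_right (by linarith [Real.rpow_nonneg ha (1 - γ)]) (by linarith)

theorem mul_div_sq_le_mul_inv {x p a : ℝ} (hx : 0 ≤ x) (ha : 0 < a) (h : p ≤ a) :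
    x * p / a ^ 2 ≤ x * a⁻¹ :=
  calc x * p / a ^ 2 ≤ x * a / a ^ 2 :=
        div_le_div_of_nonneg_right (mul_le_mul_of_nonneg_left h hx) (sq_nonneg a)
    _ = x * a⁻¹ := by field_simp

theorem inv_le_mul_rpow_of_mul_rpow_le {K m y p : ℝ} (hK : 0 < K) (hm : 0 < m)
    (h : K⁻¹ * m ^ (-p) ≤ y) : y⁻¹ ≤ K * m ^ p :=
  calc y⁻¹ ≤ (K⁻¹ * m ^ (-p))⁻¹ := inv_anti₀ (by positivity) h
    _ = K * m ^ p := by rw [mul_inv, inv_inv, Real.rpow_neg hm.le, inv_inv]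

theorem rpow_le_mul_rpow_of_le_mul_rpow {x K t a p : ℝ} (hx : 0 ≤ x) (hK : 0 ≤ K) (ht : 0 ≤ t)
    (hp : 0 ≤ p) (h : x ≤ K * t ^ a) : x ^ p ≤ K ^ p * t ^ (a * p) :=
  calc x ^ p ≤ (K * t ^ a) ^ p := Real.rpow_le_rpow hx h hp
    _ = K ^ p * t ^ (a * p) := by rw [Real.mul_rpow hK (Real.rpow_nonneg ht a), Real.rpow_mul ht]

theorem rpow_mul_inv_le_of_power_laws {n x y Kx Ky a b p : ℝ} (hn : 1 ≤ n) (hx : 0 ≤ x)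
    (hp : 0 ≤ p) (hKx : 0 ≤ Kx) (hKy : 0 < Ky) (hxn : x ≤ Kx * n ^ a)
    (hyn : Ky⁻¹ * n ^ (-b) ≤ y) (hab : b + a * p ≤ 0) :
    x ^ p * y⁻¹ ≤ Kx ^ p * Ky := by
  have hn0 : 0 < n := by linarith
  have hy : 0 ≤ y⁻¹ := inv_nonneg.2 ((by positivity : 0 ≤ Ky⁻¹ * n ^ (-b)).trans hyn)
  calc x ^ p * y⁻¹ ≤ (Kx ^ p * n ^ (a * p)) * (Ky * n ^ b) :=
        mul_le_mul (rpow_le_mul_rpow_of_le_mul_rpow hx hKx hn0.le hp hxn)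
          (inv_le_mul_rpow_of_mul_rpow_le hKy hn0 hyn) hy (by positivity)
    _ = Kx ^ p * Ky * n ^ (b + a * p) := by rw [Real.rpow_add hn0]; ring
    _ ≤ Kx ^ p * Ky :=
        mul_le_of_le_one_right (by positivity) (Real.rpow_le_one_of_one_le_of_nonpos hn hab)

theorem inv_le_mul_rpow_of_power_laws {t m y Km Ky a b : ℝ} (ht : 0 < t) (hm : 0 < m)
    (hb : 0 ≤ b) (hKm : 0 ≤ Km) (hKy : 0 < Ky) (hmt : m ≤ Km * t ^ (-a))
    (hym : Ky⁻¹ * m ^ (-b) ≤ y) : y⁻¹ ≤ Ky * Km ^ b * t ^ (-(a * b)) :=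
  calc y⁻¹ ≤ Ky * m ^ b := inv_le_mul_rpow_of_mul_rpow_le hKy hm hym
    _ ≤ Ky * (Km ^ b * t ^ (-a * b)) :=
        mul_le_mul_of_nonneg_left (rpow_le_mul_rpow_of_le_mul_rpow hm.le hKm ht.le hb hmt) hKy.le
    _ = Ky * Km ^ b * t ^ (-(a * b)) := by rw [neg_mul, mul_assoc]

theorem rpow_neg_mul_div_sq_le_of_power_laws {t p a y m C Km Ky γ s b : ℝ} (ht : 0 < t)
    (ha : 0 < a) (hC : 0 ≤ C) (hm : 0 < m) (hb : 0 ≤ b) (hKm : 0 ≤ Km) (hKy : 0 < Ky)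
    (hp : p ≤ C * a ^ 2 / y) (hmt : m ≤ Km * t ^ (-s)) (hym : Ky⁻¹ * m ^ (-b) ≤ y) :
    t ^ (-γ) * p / a ^ 2 ≤ C * (Ky * Km ^ b) * t ^ (-(γ + s * b)) :=
  calc t ^ (-γ) * p / a ^ 2 ≤ t ^ (-γ) * (C * a ^ 2 / y) / a ^ 2 := by gcongr
    _ = C * t ^ (-γ) * y⁻¹ := by field_simp
    _ ≤ C * t ^ (-γ) * (Ky * Km ^ b * t ^ (-(s * b))) := by
        gcongr; exact inv_le_mul_rpow_of_power_laws ht hm hb hKm hKy hmt hym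
    _ = C * (Ky * Km ^ b) * t ^ (-(γ + s * b)) := by rw [neg_add, Real.rpow_add ht]; ring

theorem exists_pos_exponent_margin {γ ζ : ℝ} (h : 1 - γ > 4 / 3 * ζ) :
    ∃ d > 0, (ζ + d) + (-(3 / 4) + d) * (1 - γ) ≤ 0 ∧ γ + (4 / 3 + d) * (ζ + d) < 1 := by
  have hnear : ∀ᶠ d in 𝓝 (0 : ℝ),
      (ζ + d) + (-(3 / 4) + d) * (1 - γ) < 0 ∧ γ + (4 / 3 + d) * (ζ + d) < 1 := by
    refine (ContinuousAt.eventually_lt (by fun_prop) (by fun_prop) ?_).and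
      (ContinuousAt.eventually_lt (by fun_prop) (by fun_prop) ?_) <;> linarith
  obtain ⟨d, ⟨hfirst, hsecond⟩, hd⟩ :=
    ((hnear.filter_mono nhdsWithin_le_nhds).and (self_mem_nhdsWithin (s := Ioi 0))).exists
  exact ⟨d, hd, hfirst.le, hsecond⟩

theorem second_moment_integral_bound_general
    (γ ζ : ℝ) (hγ1 : γ < 1) (hζ : 0 < ζ)
    (hγζ : 1 - γ > 4 / 3 * ζ)
    (πs : ℕ → ℝ → ℝ) (αs : ℕ → ℝ) (ℓ : ℝ → ℕ) (ε : ℕ → ℝ)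
    (hα : ∀ n, 1 ≤ n → 0 < αs n)
    (hε : ∀ n, 1 ≤ n → 0 < ε n ∧ ε n ≤ 1)
    (hπ : ∀ n, 1 ≤ n → ∀ t ∈ Set.Icc (0:ℝ) 1, 0 ≤ πs n t ∧ πs n t ≤ αs n)
    (C : ℝ) (hC : 0 < C)
    (hπsens : ∀ n, 1 ≤ n → ∀ t : ℝ, ε n ≤ t → t ≤ 1 →
      πs n t ≤ C * (αs n) ^ 2 / αs (ℓ t))
    (hℓ : ∀ δ > (0:ℝ), ∃ K ≥ (1:ℝ), ∀ t : ℝ, 0 < t → t ≤ 1 →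
      K⁻¹ * t ^ (-(4/3 : ℝ) + δ) ≤ (ℓ t : ℝ) ∧ (ℓ t : ℝ) ≤ K * t ^ (-(4/3 : ℝ) - δ))
    (hεasym : ∀ δ > (0:ℝ), ∃ K ≥ (1:ℝ), ∀ n : ℕ, 1 ≤ n →
      K⁻¹ * (n:ℝ) ^ (-(3/4 : ℝ) - δ) ≤ ε n ∧ ε n ≤ K * (n:ℝ) ^ (-(3/4 : ℝ) + δ))
    (hαasym : ∀ δ > (0:ℝ), ∃ K ≥ (1:ℝ), ∀ m : ℕ, 1 ≤ m →
      K⁻¹ * (m:ℝ) ^ (-ζ - δ) ≤ αs m ∧ αs m ≤ K * (m:ℝ) ^ (-ζ + δ)) :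
    ∃ M : ℝ, ∀ n : ℕ, 1 ≤ n →
      (∫ t in (0:ℝ)..1, t ^ (-γ) * πs n t / (αs n) ^ 2) ≤ M := by
  obtain ⟨d, hd, hexp₁, hexp₂⟩ := exists_pos_exponent_margin hγζ
  obtain ⟨Kℓ, hKℓ, hℓd⟩ := hℓ d hd
  obtain ⟨Kε, hKε, hεd⟩ := hεasym d hd
  obtain ⟨Kα, hKα, hαd⟩ := hαasym d hd
  have hKℓ0 : 0 < Kℓ := by linarith
  have hKα0 : 0 < Kα := by linarith
  have hαlow (m : ℕ) (hm : 1 ≤ m) : Kα⁻¹ * (m : ℝ) ^ (-(ζ + d)) ≤ αs m := by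
    rw [neg_add']; exact (hαd m hm).1
  set e := (4 / 3 + d) * (ζ + d)
  set Cℓ := C * (Kα * Kℓ ^ (ζ + d))
  refine ⟨Kε ^ (1 - γ) * Kα / (1 - γ) + Cℓ * (1 / (1 - (γ + e))), fun n hn => ?_⟩
  obtain ⟨hε0, hε1⟩ := hε n hn
  have hsmall (t : ℝ) (ht : t ∈ Icc 0 (ε n)) :
      t ^ (-γ) * πs n t / αs n ^ 2 ≤ t ^ (-γ) * (αs n)⁻¹ :=
    mul_div_sq_le_mul_inv (Real.rpow_nonneg ht.1 _) (hα n hn) (hπ n hn t ⟨ht.1, ht.2.trans hε1⟩).2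
  have hlarge (t : ℝ) (ht : t ∈ Icc (ε n) 1) :
      t ^ (-γ) * πs n t / αs n ^ 2 ≤ Cℓ * t ^ (-(γ + e)) := by
    have ht0 : 0 < t := hε0.trans_le ht.1
    obtain ⟨hℓlow, hℓup⟩ := hℓd t ht0 ht.2
    have hℓpos : (0 : ℝ) < ℓ t := lt_of_lt_of_le (by positivity) hℓlow
    exact rpow_neg_mul_div_sq_le_of_power_laws ht0 (hα n hn) hC.le hℓpos (add_pos hζ hd).le
      hKℓ0.le hKα0 (hπsens n hn t ht.1 ht.2) (by rwa [neg_add']) (hαlow _ (Nat.cast_pos.mp hℓpos))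
  calc _ ≤ (∫ t in (0 : ℝ)..ε n, t ^ (-γ) * (αs n)⁻¹) + ∫ t in ε n..1, Cℓ * t ^ (-(γ + e)) :=
        intervalIntegral.integral_le_add_of_le_on_split hε0.le hε1
          (fun t ht => div_nonneg (mul_nonneg (Real.rpow_nonneg ht.1 _) (hπ n hn t ht).1)
            (sq_nonneg _))
          hsmall hlarge ((intervalIntegral.intervalIntegrable_rpow' (by linarith)).mul_const _)
          ((intervalIntegral.intervalIntegrable_rpow' (by linarith)).const_mul _)
    _ ≤ _ := by
      rw [intervalIntegral.integral_mul_const, intervalIntegral.integral_const_mul,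
        integral_zero_rpow_neg hγ1, div_mul_eq_mul_div]
      refine add_le_add (div_le_div_of_nonneg_right ?_ (by linarith))
        (mul_le_mul_of_nonneg_left (integral_rpow_neg_le hexp₂ hε0.le) (by positivity))
      exact rpow_mul_inv_le_of_power_laws (by exact_mod_cast hn) hε0.le (by linarith)
        (by linarith) hKα0 (hεd n hn).2 (hαlow n hn) hexp₁

/-- second-moment integral bound for exceptional times: if
`1 - γ > (4/3) ζ`, `π⋆_n(t) ≤ α⋆_n`, `π⋆_n(t) ≤ C (α⋆_n)²/α⋆_{ℓ(t)}` for `t ≥ ε_n`,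
`ℓ(t) = t^{-4/3+o(1)}`, `ε_n = n^{-3/4+o(1)}` and `α⋆_m = m^{-ζ+o(1)}`, then
`sup_n ∫_0^1 t^{-γ} π⋆_n(t)/(α⋆_n)² dt < ∞`. -/
theorem second_moment_integral_bound
    (γ ζ : ℝ) (hγ0 : 0 < γ) (hγ1 : γ < 1) (hζ : 0 < ζ)
    (hγζ : 1 - γ > 4 / 3 * ζ)
    (πs : ℕ → ℝ → ℝ) (αs : ℕ → ℝ) (ℓ : ℝ → ℕ) (ε : ℕ → ℝ)
    (hα : ∀ n, 1 ≤ n → 0 < αs n)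
    (hε : ∀ n, 1 ≤ n → 0 < ε n ∧ ε n ≤ 1)
    (hπ : ∀ n, 1 ≤ n → ∀ t ∈ Set.Icc (0:ℝ) 1, 0 ≤ πs n t ∧ πs n t ≤ αs n)
    (C : ℝ) (hC : 0 < C)
    (hπsens : ∀ n, 1 ≤ n → ∀ t : ℝ, ε n ≤ t → t ≤ 1 →
      πs n t ≤ C * (αs n) ^ 2 / αs (ℓ t))
    (hℓ : ∀ δ > (0:ℝ), ∃ K ≥ (1:ℝ), ∀ t : ℝ, 0 < t → t ≤ 1 →
      K⁻¹ * t ^ (-(4/3 : ℝ) + δ) ≤ (ℓ t : ℝ) ∧ (ℓ t : ℝ) ≤ K * t ^ (-(4/3 : ℝ) - δ))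
    (hεasym : ∀ δ > (0:ℝ), ∃ K ≥ (1:ℝ), ∀ n : ℕ, 1 ≤ n →
      K⁻¹ * (n:ℝ) ^ (-(3/4 : ℝ) - δ) ≤ ε n ∧ ε n ≤ K * (n:ℝ) ^ (-(3/4 : ℝ) + δ))
    (hαasym : ∀ δ > (0:ℝ), ∃ K ≥ (1:ℝ), ∀ m : ℕ, 1 ≤ m →
      K⁻¹ * (m:ℝ) ^ (-ζ - δ) ≤ αs m ∧ αs m ≤ K * (m:ℝ) ^ (-ζ + δ)) :
    ∃ M : ℝ, ∀ n : ℕ, 1 ≤ n →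
      (∫ t in (0:ℝ)..1, t ^ (-γ) * πs n t / (αs n) ^ 2) ≤ M :=
  second_moment_integral_bound_general γ ζ hγ1 hζ hγζ πs αs ℓ ε hα hε hπ C hC hπsens hℓ hεasym
    hαasym
end
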